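/- Let U be an arbitrary semigroup and let T = ⟨U, p | Up = p⟩ be the semigroup generated by U and one extra element p ∉ U, defined by the relations u·v = uv (the product in U) and u·p = p for all u, v ∈ U. Then c.d. T = 1, and for every T-module A there is an isomorphism H¹(T,A) ≅ A/(p−1)A, where (p−1)A denotes the subgroup of A generated by {pa − a : a ∈ A}. -/

import Mathlib

structure SgModule (S : Type) [Semigroup S] where
  carrier : Type
  [grp : AddCommGroup carrier]
  smul : S → carrier → carrier
  smul_add : ∀ s a b, smul s (a + b) = smul s a + smul s b
  mul_smul : ∀ s t a, smul (s * t) a = smul s (smul t a)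

attribute [instance] SgModule.grp

/-- `altSign k a = (-1)^k • a`. -/
def altSign {A : Type} [AddCommGroup A] (k : ℕ) (a : A) : A :=
  if Even k then a else -a

lemma altSign_add {A : Type} [AddCommGroup A] (k : ℕ) (a b : A) :
    altSign k (a + b) = altSign k a + altSign k b := by
  unfold altSign; split <;> [rfl; exact neg_add a b]

def mulContract {S : Type} [Mul S] {n : ℕ} (x : Fin (n + 1) → S) (i : Fin n) :
    Fin n → S := fun j =>
  if (j : ℕ) < (i : ℕ) then x j.castSucc
  else if (j : ℕ) = (i : ℕ) then x j.castSucc * x j.succ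
  else x j.succ

namespace SgModule

variable {S : Type} [Semigroup S] (M : SgModule S)

abbrev cochain (n : ℕ) : Type := (Fin n → S) → M.carrier

def cobFun {n : ℕ} (f : M.cochain n) : M.cochain (n + 1) := fun x =>
  M.smul (x 0) (f (Fin.tail x))
    + (∑ i : Fin n, altSign ((i : ℕ) + 1) (f (mulContract x i)))
    + altSign (n + 1) (f (Fin.init x))

lemma cobFun_add {n : ℕ} (f g : M.cochain n) :
    M.cobFun (f + g) = M.cobFun f + M.cobFun g := by
  funext x
  show M.cobFun (f + g) x = M.cobFun f x + M.cobFun g x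
  unfold cobFun
  simp only [Pi.add_apply, altSign_add, M.smul_add]
  rw [Finset.sum_add_distrib]
  abel

def cob (n : ℕ) : M.cochain n →+ M.cochain (n + 1) :=
  AddMonoidHom.mk' M.cobFun M.cobFun_add

def cocycles (n : ℕ) : AddSubgroup (M.cochain n) := (M.cob n).ker

def cobounds : (n : ℕ) → AddSubgroup (M.cochain n)
  | 0 => ⊥
  | n + 1 => (M.cob n).range

def cohomology (n : ℕ) : Type :=
  M.cocycles n ⧸ (M.cobounds n).addSubgroupOf (M.cocycles n)

noncomputable instance (n : ℕ) : AddCommGroup (M.cohomology n) := by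
  unfold cohomology; infer_instance

end SgModule

noncomputable def cohDim (S : Type) [Semigroup S] : ℕ∞ :=
  sSup {e : ℕ∞ | ∃ n : ℕ, e = (n : ℕ∞) ∧ ∃ M : SgModule S, Nontrivial (M.cohomology n)}

def IsFreeSemigroup (T : Type) [Semigroup T] : Prop :=
  ∃ X : Type, Nonempty (T ≃* FreeSemigroup X)


/-- The defining congruence of the semigroup `T = ⟨U, p ∣ Up = p⟩`: generated
by `u·v = uv` and `u·p = p` (`u, v ∈ U`, with `p` the generator `none`). -/
def upCon (U : Type) [Semigroup U] : Con (FreeSemigroup (Option U)) :=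
  conGen (fun a b =>
    (∃ u v : U, a = FreeSemigroup.of (some u) * FreeSemigroup.of (some v) ∧
      b = FreeSemigroup.of (some (u * v))) ∨
    (∃ u : U, a = FreeSemigroup.of (some u) * FreeSemigroup.of none ∧
      b = FreeSemigroup.of none))

/-- The element `p` of `T = ⟨U, p ∣ Up = p⟩`. -/
def upP (U : Type) [Semigroup U] : (upCon U).Quotient :=
  ((FreeSemigroup.of (none : Option U) : FreeSemigroup (Option U)) : (upCon U).Quotient)

/-!
For `n ≥ 2` every `n`-cocycle of `T` is a coboundary: in `T` one has `t p = p ^ (deg t + 1)`,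
where `deg t` counts the occurrences of `p` in `t`, and this identity yields an explicit contracting
homotopy `C^(m+2) → C^(m+1)`.

In degree one the cocycles are the crossed homomorphisms `d (s t) = s d t + d s`. The relation
`u p = p` forces `d u = d p - u d p`, so `d` is determined by `d p`, and every value `a` of `d p`
occurs: take the first component of the section `T → A ⋊ T` with `p ↦ (a, p)`, `u ↦ (a - u a, u)`.
Evaluation at `p` thus identifies `Z¹` with `A` and the principal crossed homomorphisms
`t ↦ t a - a` with `(p - 1)A`. For the trivial module `ℤ` this gives `H¹ ≅ ℤ ≠ 0`, so `c.d. T = 1`.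
-/

namespace Fin
variable {α : Type} {n : ℕ}

lemma tail_snoc (x : Fin (n + 1) → α) (a : α) :
    tail (snoc x a : Fin (n + 2) → α) = snoc (tail x) a := by
  funext j
  induction j using lastCases with
  | last => simp [tail, succ_last]
  | cast j => simp [tail, succ_castSucc, -castSucc_succ]

lemma init_apply_zero (x : Fin (n + 2) → α) : init x 0 = x 0 := rfl

lemma tail_apply_last (x : Fin (n + 2) → α) : tail x (last n) = x (last (n + 1)) := rfl

end Fin

section MulContract
variable {S : Type} [Mul S] {n : ℕ}

lemma mulContract_snoc_castSucc (x : Fin (n + 1) → S) (a : S) (i : Fin n) :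
    mulContract (Fin.snoc x a) i.castSucc = Fin.snoc (mulContract x i) a := by
  funext j
  induction j using Fin.lastCases with
  | last => simp [mulContract, Fin.succ_last, i.isLt.ne', i.isLt.not_gt]
  | cast j => simp [mulContract, Fin.succ_castSucc, -Fin.castSucc_succ]

lemma mulContract_snoc_last (x : Fin (n + 1) → S) (a : S) :
    mulContract (Fin.snoc x a) (Fin.last n) = Fin.snoc (Fin.init x) (x (Fin.last n) * a) := by
  funext j
  induction j using Fin.lastCases with
  | last => simp [mulContract, Fin.succ_last]
  | cast j => simp [mulContract, Fin.init, j.isLt]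

lemma mulContract_castSucc (x : Fin (n + 2) → S) (i : Fin n) :
    mulContract x i.castSucc = Fin.snoc (mulContract (Fin.init x) i) (x (Fin.last (n + 1))) := by
  conv_lhs => rw [← Fin.snoc_init_self x]
  rw [mulContract_snoc_castSucc]

lemma mulContract_last (x : Fin (n + 2) → S) :
    mulContract x (Fin.last n)
      = Fin.snoc (Fin.init (Fin.init x)) (Fin.init x (Fin.last n) * x (Fin.last (n + 1))) := by
  conv_lhs => rw [← Fin.snoc_init_self x]
  rw [mulContract_snoc_last]

end MulContract

section AltSign

variable {A : Type} [AddCommGroup A]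

def altSignHom (k : ℕ) : A →+ A := AddMonoidHom.mk' (altSign k) (altSign_add k)

lemma altSign_zero (k : ℕ) : altSign k (0 : A) = 0 := map_zero (altSignHom k)

lemma altSign_neg (k : ℕ) (a : A) : altSign k (-a) = -altSign k a := map_neg (altSignHom k) a

lemma altSign_sub (k : ℕ) (a b : A) : altSign k (a - b) = altSign k a - altSign k b :=
  map_sub (altSignHom k) a b

lemma altSign_sum {ι : Type} (s : Finset ι) (k : ℕ) (g : ι → A) :
    altSign k (∑ i ∈ s, g i) = ∑ i ∈ s, altSign k (g i) :=
  map_sum (altSignHom k) g s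

lemma altSign_of_even {k : ℕ} (h : Even k) (a : A) : altSign k a = a := if_pos h

lemma altSign_of_not_even {k : ℕ} (h : ¬Even k) (a : A) : altSign k a = -a := if_neg h

lemma altSign_succ (k : ℕ) (a : A) : altSign (k + 1) a = -altSign k a := by
  by_cases h : Even k
  · rw [altSign_of_even h, altSign_of_not_even (by simpa [Nat.even_add_one])]
  · rw [altSign_of_not_even h, altSign_of_even (Nat.even_add_one.mpr h), neg_neg]

lemma altSign_altSign (j k : ℕ) (a : A) : altSign j (altSign k a) = altSign (j + k) a := by
  induction j with
  | zero => rw [zero_add, altSign_of_even Even.zero]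
  | succ j ih => rw [altSign_succ, ih, Nat.succ_add, altSign_succ]

end AltSign

namespace SgModule

variable {S : Type} [Semigroup S] (M : SgModule S)

def smulHom (s : S) : M.carrier →+ M.carrier := AddMonoidHom.mk' (M.smul s) (M.smul_add s)

lemma smul_zero (s : S) : M.smul s 0 = 0 := map_zero (M.smulHom s)

lemma smul_sub (s : S) (a b : M.carrier) : M.smul s (a - b) = M.smul s a - M.smul s b :=
  map_sub (M.smulHom s) a b

lemma smul_sum {ι : Type} (s : S) (t : Finset ι) (g : ι → M.carrier) :
    M.smul s (∑ i ∈ t, g i) = ∑ i ∈ t, M.smul s (g i) :=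
  map_sum (M.smulHom s) g t

lemma cobFun_sub {n : ℕ} (f g : M.cochain n) : M.cobFun (f - g) = M.cobFun f - M.cobFun g :=
  map_sub (M.cob n) f g

lemma cobFun_altSign {n : ℕ} (k : ℕ) (g : M.cochain n) (x : Fin (n + 1) → S) :
    M.cobFun (fun y => altSign k (g y)) x = altSign k (M.cobFun g x) := by
  by_cases h : Even k
  · simp only [altSign_of_even h]
  · simp only [altSign_of_not_even h]
    exact congrFun (map_neg (M.cob n) g) x

lemma cobFun_comp_snoc {k : ℕ} (f : M.cochain (k + 1)) (a : S) (x : Fin (k + 1) → S) :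
    M.cobFun (fun y => f (Fin.snoc y a)) x
      = M.cobFun f (Fin.snoc x a)
        + altSign (k + 1) (f x - f (Fin.snoc (Fin.init x) (x (Fin.last k) * a))
            + f (Fin.snoc (Fin.init x) a)) := by
  unfold cobFun
  rw [Fin.sum_univ_castSucc
    (f := fun i : Fin (k + 1) => altSign ((i : ℕ) + 1) (f (mulContract (Fin.snoc x a) i)))]
  simp only [Fin.tail_snoc, Fin.init_snoc, Fin.snoc_apply_zero, mulContract_snoc_castSucc,
    mulContract_snoc_last, Fin.val_castSucc, Fin.val_last]
  rw [altSign_add, altSign_sub, altSign_succ (k + 1)]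
  abel

end SgModule

section SuccPow

variable {S : Type} [Semigroup S]

/-- `succPow p j = p ^ (j + 1)`: a semigroup has no `p ^ 0`. -/
def succPow (p : S) : ℕ → S
  | 0 => p
  | j + 1 => succPow p j * p

lemma succPow_succ (p : S) (j : ℕ) : succPow p (j + 1) = succPow p j * p := rfl

lemma mul_succPow {p s : S} {k : ℕ} (h : s * p = succPow p k) (j : ℕ) :
    s * succPow p j = succPow p (k + j) := by
  induction j with
  | zero => exact h
  | succ j ih => rw [succPow_succ, ← mul_assoc, ih]; rfl

end SuccPow

namespace SgModule

variable {S : Type} [Semigroup S] (M : SgModule S) (p : S) (deg : S → ℕ)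

/-- Appending `p` contracts the complex up to the terms `f (y₁, …, yₘ, y p) - f (y₁, …, yₘ, p)`;
as `y p = p ^ (deg y + 1)`, the sum over the powers of `p` telescopes them away. -/
def homotopy (m : ℕ) (f : M.cochain (m + 2)) : M.cochain (m + 1) := fun y =>
  altSign m (f (Fin.snoc y p)
    - ∑ j ∈ Finset.range (deg (y (Fin.last m))),
        f (Fin.snoc (Fin.snoc (Fin.init y) (succPow p j)) p))

variable {p deg}

lemma cobFun_sum_snoc_succPow (hdeg : ∀ s t, deg (s * t) = deg s + deg t)
    (hp : ∀ s, s * p = succPow p (deg s)) {k : ℕ} (f : M.cochain (k + 2))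
    (x : Fin (k + 2) → S) :
    M.cobFun (fun y => ∑ j ∈ Finset.range (deg (y (Fin.last k))),
        f (Fin.snoc (Fin.snoc (Fin.init y) (succPow p j)) p)) x
      = (∑ j ∈ Finset.range (deg (x (Fin.last (k + 1)))),
          M.cobFun f (Fin.snoc (Fin.snoc (Fin.init x) (succPow p j)) p))
        + altSign (k + 1) (f (Fin.snoc (Fin.init x) (x (Fin.last (k + 1)) * p))
            - f (Fin.snoc (Fin.init x) p)) := by
  have hmul : ∀ s j, s * succPow p j = succPow p (deg s + j) := fun s => mul_succPow (hp s)
  unfold cobFun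
  simp only [Fin.sum_univ_castSucc, Fin.tail_snoc, Fin.init_snoc, Fin.snoc_last,
    Fin.snoc_apply_zero, Fin.init_apply_zero, Fin.tail_apply_last, Fin.tail_init_eq_init_tail,
    mulContract_castSucc, mulContract_last, Fin.val_castSucc, Fin.val_last, hdeg, hmul,
    ← succPow_succ]
  have altSign_add_two : ∀ a : M.carrier, altSign (k + 2 + 1) a = altSign (k + 1) a := fun a => by
    rw [altSign_succ, altSign_succ, neg_neg]
  rw [hp, show f (Fin.snoc (Fin.init x) p) = f (Fin.snoc (Fin.init x) (succPow p 0)) from rfl,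
    M.smul_sum]
  simp only [altSign_sum, altSign_sub, altSign_succ (k + 1), altSign_add_two, Finset.sum_add_distrib,
    Finset.sum_neg_distrib]
  rw [Finset.sum_comm, Finset.sum_range_add
    (fun j => altSign (k + 1) (f (Fin.snoc (Fin.snoc (Fin.init (Fin.init x)) (succPow p j)) p)))
    (deg (Fin.init x (Fin.last k))) (deg (x (Fin.last (k + 1))))]
  have telescope := Finset.sum_range_sub
    (fun j => altSign (k + 1) (f (Fin.snoc (Fin.init x) (succPow p j)))) (deg (x (Fin.last (k + 1))))
  rw [Finset.sum_sub_distrib, sub_eq_iff_eq_add] at telescope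
  rw [telescope]
  abel

theorem cobFun_homotopy_add_homotopy_cobFun (hdeg : ∀ s t, deg (s * t) = deg s + deg t)
    (hp : ∀ s, s * p = succPow p (deg s)) (m : ℕ) (f : M.cochain (m + 2)) :
    M.cobFun (M.homotopy p deg m f) + M.homotopy p deg (m + 1) (M.cobFun f) = f := by
  funext x
  have hcob : M.cobFun (M.homotopy p deg m f) x
      = altSign m (M.cobFun (fun y => f (Fin.snoc y p)) x
          - M.cobFun (fun y => ∑ j ∈ Finset.range (deg (y (Fin.last m))),
              f (Fin.snoc (Fin.snoc (Fin.init y) (succPow p j)) p)) x) := by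
    have h := M.cobFun_altSign m ((fun y => f (Fin.snoc y p))
      - fun y => ∑ j ∈ Finset.range (deg (y (Fin.last m))),
          f (Fin.snoc (Fin.snoc (Fin.init y) (succPow p j)) p)) x
    rwa [cobFun_sub] at h
  rw [Pi.add_apply, hcob, homotopy.eq_def, cobFun_comp_snoc, M.cobFun_sum_snoc_succPow hdeg hp]
  simp only [altSign_sub, altSign_add, altSign_neg, altSign_succ, altSign_altSign,
    altSign_of_even (⟨m, rfl⟩ : Even (m + m))]
  abel

theorem cocycles_le_cobounds_of_mul_eq_succPow (hdeg : ∀ s t, deg (s * t) = deg s + deg t)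
    (hp : ∀ s, s * p = succPow p (deg s)) (m : ℕ) :
    M.cocycles (m + 2) ≤ M.cobounds (m + 2) := by
  intro f hf
  have hf0 : M.cobFun f = 0 := hf
  refine ⟨M.homotopy p deg m f, ?_⟩
  have h := M.cobFun_homotopy_add_homotopy_cobFun hdeg hp m f
  rwa [hf0, show M.homotopy p deg (m + 1) 0 = 0 by funext y; simp [homotopy, altSign_zero],
    add_zero] at h

lemma subsingleton_cohomology {n : ℕ} (h : M.cocycles n ≤ M.cobounds n) :
    Subsingleton (M.cohomology n) := by
  have htop : (M.cobounds n).addSubgroupOf (M.cocycles n) = ⊤ :=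
    (AddSubgroup.addSubgroupOf_eq_top).mpr h
  show Subsingleton (M.cocycles n ⧸ (M.cobounds n).addSubgroupOf (M.cocycles n))
  rw [htop]
  exact QuotientAddGroup.subsingleton_quotient_top

end SgModule

section Presentation

variable (U : Type) [Semigroup U]

def upOf (x : Option U) : (upCon U).Quotient :=
  ((FreeSemigroup.of x : FreeSemigroup (Option U)) : (upCon U).Quotient)

variable {U}

lemma upOf_some_mul_upOf_some (u v : U) :
    upOf U (some u) * upOf U (some v) = upOf U (some (u * v)) :=
  (Con.eq _).2 (ConGen.Rel.of _ _ (Or.inl ⟨u, v, rfl, rfl⟩))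

lemma upOf_some_mul_upP (u : U) : upOf U (some u) * upP U = upP U :=
  (Con.eq _).2 (ConGen.Rel.of _ _ (Or.inr ⟨u, rfl, rfl⟩))

lemma upCon_induction {C : (upCon U).Quotient → Prop} (t : (upCon U).Quotient)
    (of : ∀ x, C (upOf U x)) (of_mul : ∀ x t, C t → C (upOf U x * t)) : C t := by
  induction t using Con.induction_on with
  | H w =>
    induction w using FreeSemigroup.recOnMul with
    | ih1 x => exact of x
    | ih2 x w _ ih => exact of_mul x w ih

lemma upCon_le_ker_lift {P : Type} [Semigroup P] (g : Option U → P)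
    (h_some : ∀ u v, g (some u) * g (some v) = g (some (u * v)))
    (h_none : ∀ u, g (some u) * g none = g none) :
    upCon U ≤ Con.ker (FreeSemigroup.lift g) := by
  refine Con.conGen_le.mpr ?_
  rintro a b (⟨u, v, rfl, rfl⟩ | ⟨u, rfl, rfl⟩)
  · exact (map_mul _ _ _).trans (h_some u v)
  · exact (map_mul _ _ _).trans (h_none u)

def upLift {P : Type} [Semigroup P] (g : Option U → P)
    (h_some : ∀ u v, g (some u) * g (some v) = g (some (u * v)))
    (h_none : ∀ u, g (some u) * g none = g none) : (upCon U).Quotient →ₙ* P where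
  toFun t := Con.liftOn t (FreeSemigroup.lift g) fun _ _ h => upCon_le_ker_lift g h_some h_none h
  map_mul' s t := by
    induction s using Con.induction_on
    induction t using Con.induction_on
    exact map_mul (FreeSemigroup.lift g) _ _

variable (U)

def upDeg (t : (upCon U).Quotient) : ℕ :=
  Multiplicative.toAdd
    (upLift (fun x => Multiplicative.ofAdd (x.elim 1 fun _ => 0)) (fun _ _ => rfl)
      (fun _ => rfl) t)

variable {U}

lemma upDeg_mul (s t : (upCon U).Quotient) : upDeg U (s * t) = upDeg U s + upDeg U t := by
  rw [upDeg, map_mul]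
  rfl

lemma upOf_mul_upP (x : Option U) : upOf U x * upP U = succPow (upP U) (upDeg U (upOf U x)) := by
  cases x with
  | none => rfl
  | some u => exact upOf_some_mul_upP u

lemma mul_upP (t : (upCon U).Quotient) : t * upP U = succPow (upP U) (upDeg U t) := by
  induction t using upCon_induction with
  | of x => exact upOf_mul_upP x
  | of_mul x t ih => rw [mul_assoc, ih, mul_succPow (upOf_mul_upP x), upDeg_mul]

end Presentation

namespace SgModule

variable {S : Type} [Semigroup S] (M : SgModule S)

lemma cochain_one_eq (f : M.cochain 1) (x : Fin 1 → S) : f x = f fun _ => x 0 :=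
  congrArg f (funext fun j => congrArg x (Subsingleton.elim j 0))

lemma cobFun_zero_apply (g : M.cochain 0) (x : Fin 1 → S) :
    M.cobFun g x = M.smul (x 0) (g Fin.elim0) - g Fin.elim0 := by
  simp only [cobFun, Finset.univ_eq_empty, Finset.sum_empty, zero_add,
    altSign_of_not_even Nat.not_even_one, Subsingleton.elim (Fin.tail x) Fin.elim0,
    Subsingleton.elim (Fin.init x) Fin.elim0, add_zero, ← sub_eq_add_neg]

lemma cobFun_one_apply (f : M.cochain 1) (x : Fin 2 → S) :
    M.cobFun f x = M.smul (x 0) (f fun _ => x 1) - f (fun _ => x 0 * x 1) + f fun _ => x 0 := by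
  rw [cobFun, Fin.sum_univ_one, M.cochain_one_eq f (Fin.tail x), M.cochain_one_eq f (Fin.init x),
    M.cochain_one_eq f (mulContract x 0)]
  simp only [Fin.val_zero, altSign_of_not_even Nat.not_even_one,
    altSign_of_even (by decide : Even (1 + 1)), sub_eq_add_neg]
  rfl

lemma mem_cocycles_one_iff (f : M.cochain 1) :
    f ∈ M.cocycles 1 ↔ ∀ s t, f (fun _ => s * t) = M.smul s (f fun _ => t) + f fun _ => s := by
  refine ⟨fun hf s t => ?_, fun hf => ?_⟩
  · have h := congrFun (show M.cobFun f = 0 from hf) ![s, t]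
    rw [cobFun_one_apply, Pi.zero_apply] at h
    simp only [Matrix.cons_val_zero, Matrix.cons_val_one] at h
    exact (eq_of_sub_eq_zero (by rw [← h]; abel)).symm
  · show M.cobFun f = 0
    funext x
    rw [cobFun_one_apply, hf, Pi.zero_apply]
    abel

@[ext]
structure Semidirect where
  fst : M.carrier
  snd : S

instance : Semigroup M.Semidirect where
  mul x y := ⟨x.fst + M.smul x.snd y.fst, x.snd * y.snd⟩
  mul_assoc x y z := by
    ext
    · show x.fst + M.smul x.snd y.fst + M.smul (x.snd * y.snd) z.fst
        = x.fst + M.smul x.snd (y.fst + M.smul y.snd z.fst)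
      rw [M.mul_smul, M.smul_add, add_assoc]
    · exact mul_assoc x.snd y.snd z.snd

variable {M}

@[simp]
lemma Semidirect.fst_mul (x y : M.Semidirect) : (x * y).fst = x.fst + M.smul x.snd y.fst := rfl

@[simp]
lemma Semidirect.snd_mul (x y : M.Semidirect) : (x * y).snd = x.snd * y.snd := rfl

end SgModule

section FirstCohomology

variable {U : Type} [Semigroup U] (M : SgModule (upCon U).Quotient)

def crossedSection (a : M.carrier) : (upCon U).Quotient →ₙ* M.Semidirect :=
  upLift (fun x => ⟨x.elim a fun u => a - M.smul (upOf U (some u)) a, upOf U x⟩)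
    (fun u v => by
      ext
      · simp only [SgModule.Semidirect.fst_mul, Option.elim_some, M.smul_sub, ← M.mul_smul,
          upOf_some_mul_upOf_some]
        abel
      · exact upOf_some_mul_upOf_some u v)
    (fun u => by
      ext
      · simp only [SgModule.Semidirect.fst_mul, Option.elim_some, Option.elim_none]
        abel
      · exact upOf_some_mul_upP u)

lemma crossedSection_snd (a : M.carrier) (t : (upCon U).Quotient) :
    (crossedSection M a t).snd = t := by
  induction t using upCon_induction with
  | of x => rfl
  | of_mul x t ih => rw [map_mul, SgModule.Semidirect.snd_mul, ih]; rfl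

lemma exists_crossed_apply_upP (a : M.carrier) :
    ∃ d : (upCon U).Quotient → M.carrier,
      (∀ s t, d (s * t) = M.smul s (d t) + d s) ∧ d (upP U) = a :=
  ⟨fun t => (crossedSection M a t).fst, fun s t => by
    show (crossedSection M a (s * t)).fst = _
    rw [map_mul, SgModule.Semidirect.fst_mul, crossedSection_snd, add_comm], rfl⟩

lemma crossed_eq_zero_of_apply_upP (d : (upCon U).Quotient → M.carrier)
    (hd : ∀ s t, d (s * t) = M.smul s (d t) + d s) (hp : d (upP U) = 0)
    (t : (upCon U).Quotient) : d t = 0 := by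
  have hgen : ∀ x, d (upOf U x) = 0 := fun x => by
    cases x with
    | none => exact hp
    | some u => simpa [upOf_some_mul_upP, hp, M.smul_zero] using (hd (upOf U (some u)) (upP U)).symm
  induction t using upCon_induction with
  | of x => exact hgen x
  | of_mul x t ih => rw [hd, ih, hgen, M.smul_zero, add_zero]

def evalUpP : M.cocycles 1 →+ M.carrier :=
  (Pi.evalAddMonoidHom (fun _ => M.carrier) fun _ => upP U).comp (M.cocycles 1).subtype

lemma evalUpP_bijective : Function.Bijective (evalUpP M) := by
  refine ⟨(injective_iff_map_eq_zero _).2 fun ⟨f, hf⟩ hp => ?_, fun a => ?_⟩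
  · have hd := (M.mem_cocycles_one_iff f).1 hf
    ext x
    rw [Subtype.coe_mk, M.cochain_one_eq f x]
    exact crossed_eq_zero_of_apply_upP M (fun t => f fun _ => t) hd hp (x 0)
  · obtain ⟨d, hd, hda⟩ := exists_crossed_apply_upP M a
    exact ⟨⟨fun x => d (x 0), (M.mem_cocycles_one_iff _).2 hd⟩, hda⟩

lemma map_evalUpP_cobounds :
    ((M.cobounds 1).addSubgroupOf (M.cocycles 1)).map (evalUpP M)
      = AddSubgroup.closure {x : M.carrier | ∃ a : M.carrier, x = M.smul (upP U) a - a} := by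
  apply le_antisymm
  · rintro _ ⟨⟨f, hf⟩, ⟨g, rfl⟩, rfl⟩
    exact AddSubgroup.subset_closure ⟨g Fin.elim0, M.cobFun_zero_apply g fun _ => upP U⟩
  · rw [AddSubgroup.closure_le]
    rintro _ ⟨a, rfl⟩
    have hcob : M.cob 0 (fun _ => a) ∈ M.cocycles 1 :=
      (M.mem_cocycles_one_iff _).2 fun s t => by
        simp only [SgModule.cob, AddMonoidHom.mk'_apply, SgModule.cobFun_zero_apply, M.smul_sub,
          M.mul_smul]
        abel
    exact ⟨⟨_, hcob⟩, ⟨fun _ => a, rfl⟩, M.cobFun_zero_apply (fun _ => a) fun _ => upP U⟩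

noncomputable def cohomologyOneEquiv :
    M.cohomology 1 ≃+ M.carrier ⧸
      AddSubgroup.closure {x : M.carrier | ∃ a : M.carrier, x = M.smul (upP U) a - a} :=
  QuotientAddGroup.congr _ _ (AddEquiv.ofBijective _ (evalUpP_bijective M))
    (map_evalUpP_cobounds M)

end FirstCohomology

def SgModule.trivial (S : Type) [Semigroup S] (A : Type) [AddCommGroup A] : SgModule S where
  carrier := A
  smul _ a := a
  smul_add _ _ _ := rfl
  mul_smul _ _ _ := rfl

lemma cohDim_eq_one {S : Type} [Semigroup S]
    (hvanish : ∀ (M : SgModule S) (m : ℕ), Subsingleton (M.cohomology (m + 2)))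
    (M : SgModule S) (hM : Nontrivial (M.cohomology 1)) : cohDim S = 1 := by
  refine le_antisymm (sSup_le ?_) (le_sSup ⟨1, by norm_cast, M, hM⟩)
  rintro _ ⟨n, rfl, N, hN⟩
  obtain _ | _ | m := n
  · exact_mod_cast zero_le_one
  · exact le_rfl
  · exact absurd hN (not_nontrivial_iff_subsingleton.mpr (hvanish N m))

lemma nontrivial_cohomology_one_trivial (U : Type) [Semigroup U] :
    Nontrivial ((SgModule.trivial (upCon U).Quotient ℤ).cohomology 1) := by
  have hbot : AddSubgroup.closure {x : ℤ | ∃ a : ℤ, x = a - a} = ⊥ :=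
    AddSubgroup.closure_eq_bot_iff.mpr fun _ ⟨a, ha⟩ => ha.trans (sub_self a)
  have : Nontrivial (ℤ ⧸ AddSubgroup.closure {x : ℤ | ∃ a : ℤ, x = a - a}) := by
    rw [hbot]
    exact QuotientAddGroup.quotientBot.toEquiv.nontrivial
  exact @Equiv.nontrivial _ _ (cohomologyOneEquiv (SgModule.trivial _ ℤ)).toEquiv this

/-- For any semigroup `U` and `T = ⟨U, p ∣ Up = p⟩`,
`c.d. T = 1` and `H¹(T, A) ≅ A/(p−1)A` for every `T`-module `A`. -/
theorem cd_one_and_H1_of_Up_eq_p (U : Type) [Semigroup U] :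
    cohDim (upCon U).Quotient = 1 ∧
      ∀ M : SgModule (upCon U).Quotient,
        Nonempty (M.cohomology 1 ≃+
          (M.carrier ⧸ AddSubgroup.closure
            {x : M.carrier | ∃ a : M.carrier, x = M.smul (upP U) a - a})) :=
  ⟨cohDim_eq_one
      (fun M m => M.subsingleton_cohomology
        (M.cocycles_le_cobounds_of_mul_eq_succPow upDeg_mul mul_upP m))
      _ (nontrivial_cohomology_one_trivial U),
    fun M => ⟨cohomologyOneEquiv M⟩⟩
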